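/- arXiv:1908.04989 — 5 statements merged into one kernel-verified Lean document; each statement's English description precedes it below -/
import Mathlib

section
/- Let α ∈ (0,1) and let ψ be holomorphic on the punctured disk Δ*. Suppose there exist 0 < R < 1, M > 0, N ≥ 0 such that ∬_{1/r < |ω| < R} |ω|^{2(α-1)} |αψ(ω) + ωψ'(ω)|² dx dy ≤ M r^N for all r > 1/R. Then 0 is not an essential singularity of ψ (i.e., ψ extends meromorphically to 0). -/
/-!
Let `g = αψ + ωψ'`, so that `d/du (u ^ α ψ (u ζ)) = u ^ (α - 1) g (u ζ)` along every ray.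
Since `|g|²` is subharmonic, `|g(z)|²` is at most its mean over the disk of radius `|z|/2`
about `z`; that disk lies in the annulus `|z|/4 < |ω| < R`, where the weight `|ω| ^ (2(α-1))` is
at least `1`, so the area bound with `r = 4/|z|` gives `|g(z)| = O(|z| ^ (-N/2 - 1))`.
Integrating along the ray from `|z|` to `R/2` yields `|z| ^ α |ψ(z)| = O(|z| ^ (α - N/2 - 2))`,
hence `ψ(z) z ^ k` is bounded for every integer `k ≥ N/2 + 2`.
-/

open Complex MeasureTheory

/-- The punctured unit disk in ℂ. -/
def PuncturedDisk : Set ℂ := {ω : ℂ | 0 < ‖ω‖ ∧ ‖ω‖ < 1}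

open Metric Set Real

section Polar

variable {E : Type*} [NormedAddCommGroup E] [NormedSpace ℝ E]

theorem circleMap_mem_ball_iff {c : ℂ} {ρ d θ : ℝ} :
    circleMap c ρ θ ∈ ball c d ↔ |ρ| < d := by
  rw [mem_ball, dist_eq_norm, circleMap_sub_center, norm_circleMap_zero]

theorem setIntegral_ball_eq_setIntegral_polar (f : ℂ → E) (c : ℂ) (d : ℝ) :
    ∫ z in ball c d, f z = ∫ p in Ioo 0 d ×ˢ Ioo (-π) π, p.1 • f (circleMap c p.1 p.2) := by
  have hpolar : ∀ p ∈ polarCoord.target,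
      p.1 • (ball c d).indicator f (c + Complex.polarCoord.symm p)
        = (Ioo 0 d ×ˢ Ioo (-π) π).indicator (fun p => p.1 • f (circleMap c p.1 p.2)) p := by
    rintro ⟨ρ, θ⟩ ⟨hρ : 0 < ρ, hθ⟩
    have hcircle : c + Complex.polarCoord.symm (ρ, θ) = circleMap c ρ θ := by
      rw [Complex.polarCoord_symm_apply, circleMap, Complex.exp_mul_I]; push_cast; ring
    by_cases hρd : ρ < d
    · rw [hcircle, indicator_of_mem (circleMap_mem_ball_iff.2 (by rwa [abs_of_pos hρ])),
        indicator_of_mem (mk_mem_prod (show ρ ∈ Ioo 0 d from ⟨hρ, hρd⟩) hθ)]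
    · rw [hcircle, indicator_of_notMem (by rwa [circleMap_mem_ball_iff, abs_of_pos hρ]),
        indicator_of_notMem (fun h => hρd (mem_prod.1 h).1.2), smul_zero]
  calc ∫ z in ball c d, f z = ∫ z, (ball c d).indicator f (c + z) := by
        rw [integral_add_left_eq_self, integral_indicator measurableSet_ball]
    _ = ∫ p in polarCoord.target, p.1 • (ball c d).indicator f (c + Complex.polarCoord.symm p) :=
        (Complex.integral_comp_polarCoord_symm _).symm
    _ = _ := by
        rw [setIntegral_congr_fun polarCoord.open_target.measurableSet hpolar,
          setIntegral_indicator (measurableSet_Ioo.prod measurableSet_Ioo),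
          (inter_eq_right (s := polarCoord.target)).2 (prod_mono Ioo_subset_Ioi_self subset_rfl)]

theorem setIntegral_Ioo_circleMap_eq_smul_circleAverage (f : ℂ → E) (c : ℂ) (ρ : ℝ) :
    ∫ θ in Ioo (-π) π, f (circleMap c ρ θ) = (2 * π) • circleAverage f c ρ := by
  rw [circleAverage_def, smul_inv_smul₀ (by positivity), ← integral_Ioc_eq_integral_Ioo,
    ← intervalIntegral.integral_of_le (by linarith [pi_pos])]
  have hshift := ((periodic_circleMap c ρ).comp f).intervalIntegral_add_eq (-π) 0
  rwa [zero_add, show -π + 2 * π = π by ring] at hshift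

theorem ContinuousOn.setIntegral_ball_eq_integral_circleAverage [CompleteSpace E] {f : ℂ → E}
    {c : ℂ} {d : ℝ} (hd : 0 ≤ d) (hf : ContinuousOn f (closedBall c d)) :
    ∫ z in ball c d, f z = (2 * π) • ∫ ρ in 0..d, ρ • circleAverage f c ρ := by
  have hint : IntegrableOn (fun p : ℝ × ℝ => p.1 • f (circleMap c p.1 p.2))
      (Ioo 0 d ×ˢ Ioo (-π) π) (volume.prod volume) := by
    have hmaps : MapsTo (fun p : ℝ × ℝ => circleMap c p.1 p.2) (Icc 0 d ×ˢ Icc (-π) π)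
        (closedBall c d) := fun p hp =>
      closedBall_subset_closedBall hp.1.2 (circleMap_mem_closedBall c hp.1.1 p.2)
    refine ContinuousOn.integrableOn_compact (isCompact_Icc.prod isCompact_Icc) ?_
      |>.mono_set (prod_mono Ioo_subset_Icc_self Ioo_subset_Icc_self)
    exact continuous_fst.continuousOn.smul (hf.comp circleMap.continuous.continuousOn hmaps)
  rw [setIntegral_ball_eq_setIntegral_polar, Measure.volume_eq_prod, setIntegral_prod _ hint,
    intervalIntegral.integral_of_le hd, integral_Ioc_eq_integral_Ioo, ← integral_smul]
  refine setIntegral_congr_fun measurableSet_Ioo fun ρ _ => ?_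
  rw [integral_smul, setIntegral_Ioo_circleMap_eq_smul_circleAverage, smul_comm]

end Polar

section SubMeanValue

theorem norm_circleAverage_le {E : Type*} [NormedAddCommGroup E] [NormedSpace ℝ E] (f : ℂ → E)
    (c : ℂ) (R : ℝ) : ‖circleAverage f c R‖ ≤ circleAverage (fun z => ‖f z‖) c R := by
  simp only [circleAverage_def, norm_smul, smul_eq_mul, norm_inv,
    Real.norm_of_nonneg two_pi_pos.le]
  gcongr
  exact intervalIntegral.norm_integral_le_integral_norm two_pi_pos.le

variable {g : ℂ → ℂ} {c : ℂ}

theorem DiffContOnCl.sq_norm_le_circleAverage {ρ : ℝ} (hg : DiffContOnCl ℂ g (ball c |ρ|)) :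
    ‖g c‖ ^ 2 ≤ Real.circleAverage (fun z => ‖g z‖ ^ 2) c ρ := by
  have hsq : Real.circleAverage (fun z => g z ^ 2) c ρ = g c ^ 2 :=
    ((differentiable_pow 2).comp_diffContOnCl (f := fun w : ℂ => w ^ 2) hg).circleAverage
  calc ‖g c‖ ^ 2 = ‖Real.circleAverage (fun z => g z ^ 2) c ρ‖ := by rw [hsq, norm_pow]
    _ ≤ Real.circleAverage (fun z => ‖g z‖ ^ 2) c ρ :=
        (norm_circleAverage_le _ c ρ).trans_eq (by simp only [norm_pow])

theorem DiffContOnCl.sq_norm_mul_area_le_setIntegral_ball {d : ℝ} (hd : 0 ≤ d)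
    (hg : DiffContOnCl ℂ g (ball c d)) :
    ‖g c‖ ^ 2 * (π * d ^ 2) ≤ ∫ z in ball c d, ‖g z‖ ^ 2 := by
  have hcont : ContinuousOn (fun z => ‖g z‖ ^ 2) (closedBall c d) :=
    hg.continuousOn_ball.norm.pow 2
  have hint : IntervalIntegrable
      (fun ρ => ρ • Real.circleAverage (fun z => ‖g z‖ ^ 2) c ρ) volume 0 d := by
    refine ContinuousOn.intervalIntegrable ?_
    rw [uIcc_of_le hd]
    refine continuousOn_id.smul (ContinuousOn.circleAverage (hcont.mono ?_) fun ρ hρ => hρ.1)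
    exact fun z hz => mem_closedBall_iff_norm.2 hz.2
  rw [hcont.setIntegral_ball_eq_integral_circleAverage hd]
  calc ‖g c‖ ^ 2 * (π * d ^ 2) = (2 * π) • ∫ ρ in 0..d, ρ • ‖g c‖ ^ 2 := by
        simp only [smul_eq_mul, intervalIntegral.integral_mul_const, integral_id]
        ring
    _ ≤ (2 * π) • ∫ ρ in 0..d, ρ • Real.circleAverage (fun z => ‖g z‖ ^ 2) c ρ := by
        refine smul_le_smul_of_nonneg_left ?_ two_pi_pos.le
        refine intervalIntegral.integral_mono_on hd
          (Continuous.intervalIntegrable (by fun_prop) _ _) hint fun ρ hρ => ?_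
        refine smul_le_smul_of_nonneg_left ?_ hρ.1
        exact DiffContOnCl.sq_norm_le_circleAverage
          (hg.mono (ball_subset_ball ((abs_of_nonneg hρ.1).trans_le hρ.2)))

end SubMeanValue

theorem isOpen_puncturedDisk : IsOpen PuncturedDisk :=
  (isOpen_lt continuous_const continuous_norm).inter (isOpen_lt continuous_norm continuous_const)

theorem ContinuousOn.integrableOn_annulus {E : Type*} [NormedAddCommGroup E] {f : ℂ → E}
    (hf : ContinuousOn f PuncturedDisk) {a b : ℝ} (ha : 0 < a) (hb : b < 1) :
    IntegrableOn f {z | a < ‖z‖ ∧ ‖z‖ < b} := by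
  have hK : closedBall 0 b \ ball 0 a ⊆ PuncturedDisk := fun z ⟨hzb, hza⟩ =>
    ⟨ha.trans_le (not_lt.1 (mt mem_ball_zero_iff.2 hza)),
      (mem_closedBall_zero_iff.1 hzb).trans_lt hb⟩
  refine ((hf.mono hK).integrableOn_compact ((isCompact_closedBall 0 b).diff isOpen_ball)).mono_set
    fun z ⟨hza, hzb⟩ =>
      ⟨mem_closedBall_zero_iff.2 hzb.le, fun h => (mem_ball_zero_iff.1 h).not_gt hza⟩

noncomputable def eulerOperator (α : ℝ) (ψ : ℂ → ℂ) (ω : ℂ) : ℂ := α * ψ ω + ω * deriv ψ ω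

section EulerOperator

variable {α : ℝ} {ψ : ℂ → ℂ}

theorem DifferentiableOn.eulerOperator {s : Set ℂ} (hψ : DifferentiableOn ℂ ψ s) (hs : IsOpen s) :
    DifferentiableOn ℂ (eulerOperator α ψ) s :=
  (hψ.const_mul _).add (differentiableOn_id.mul (hψ.analyticOnNhd hs).deriv.differentiableOn)

theorem hasDerivAt_rpow_smul_comp_ofReal_mul {u : ℝ} (hu : 0 < u) {ζ : ℂ}
    (hψ : DifferentiableAt ℂ ψ (u * ζ)) :
    HasDerivAt (fun v : ℝ => v ^ α • ψ (v * ζ)) (u ^ (α - 1) • eulerOperator α ψ (u * ζ)) u := by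
  have hray : HasDerivAt (fun v : ℝ => ψ (v * ζ)) (deriv ψ (u * ζ) * ζ) u := by
    simpa using (hψ.hasDerivAt.comp (u : ℂ) ((hasDerivAt_id (u : ℂ)).mul_const ζ)).comp_ofReal
  refine ((Real.hasDerivAt_rpow_const (p := α) (Or.inl hu.ne')).smul hray).congr_deriv ?_
  have hu_pow : u ^ α = u ^ (α - 1) * u := by
    rw [← Real.rpow_add_one hu.ne', sub_add_cancel]
  rw [hu_pow]
  simp only [eulerOperator, Complex.real_smul]
  push_cast
  ring

end EulerOperator

section AreaBound

variable {g : ℂ → ℂ} {p R M N : ℝ}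

theorem sq_norm_mul_area_le_of_weighted_area_bound (hg : DifferentiableOn ℂ g PuncturedDisk)
    (hp : p ≤ 0) (hR1 : R < 1)
    (harea : ∀ r : ℝ, 1 / R < r →
      ∫ ω in {ω : ℂ | 1 / r < ‖ω‖ ∧ ‖ω‖ < R}, ‖ω‖ ^ p * ‖g ω‖ ^ 2 ≤ M * r ^ N)
    {z : ℂ} (hz0 : 0 < ‖z‖) (hzR : ‖z‖ ≤ R / 2) :
    ‖g z‖ ^ 2 * (π * (‖z‖ / 2) ^ 2) ≤ M * (4 / ‖z‖) ^ N := by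
  set t := ‖z‖
  set A := {ω : ℂ | 1 / (4 / t) < ‖ω‖ ∧ ‖ω‖ < R}
  have hA : A ⊆ PuncturedDisk := fun ω hω => ⟨(by positivity : (0 : ℝ) < 1 / (4 / t)).trans hω.1,
    hω.2.trans hR1⟩
  have hballA : closedBall z (t / 2) ⊆ A := by
    intro ω hω
    have hdist := mem_closedBall_iff_norm.1 hω
    have h₁ := norm_sub_norm_le z ω
    have h₂ := norm_sub_norm_le ω z
    rw [norm_sub_rev] at h₁
    refine ⟨?_, ?_⟩
    · rw [one_div_div]; linarith
    · linarith
  have hweight : ContinuousOn (fun ω => ‖ω‖ ^ p * ‖g ω‖ ^ 2) PuncturedDisk :=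
    (continuous_norm.continuousOn.rpow_const fun ω hω => Or.inl hω.1.ne').mul
      (hg.continuousOn.norm.pow 2)
  have hball_int : IntegrableOn (fun ω => ‖g ω‖ ^ 2) (ball z (t / 2)) :=
    ((hg.continuousOn.norm.pow 2).mono (hballA.trans hA) |>.integrableOn_compact
      (isCompact_closedBall z _)).mono_set ball_subset_closedBall
  calc ‖g z‖ ^ 2 * (π * (t / 2) ^ 2) ≤ ∫ ω in ball z (t / 2), ‖g ω‖ ^ 2 :=
        (hg.diffContOnCl_ball (hballA.trans hA)).sq_norm_mul_area_le_setIntegral_ball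
          (by positivity)
    _ ≤ ∫ ω in ball z (t / 2), ‖ω‖ ^ p * ‖g ω‖ ^ 2 := by
        refine setIntegral_mono_on hball_int ?_ measurableSet_ball fun ω hω => ?_
        · exact (hweight.mono (hballA.trans hA) |>.integrableOn_compact
            (isCompact_closedBall z _)).mono_set ball_subset_closedBall
        · have hω' := hA (hballA (ball_subset_closedBall hω))
          exact le_mul_of_one_le_left (by positivity)
            (Real.one_le_rpow_of_pos_of_le_one_of_nonpos hω'.1 hω'.2.le hp)
    _ ≤ ∫ ω in A, ‖ω‖ ^ p * ‖g ω‖ ^ 2 :=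
        setIntegral_mono_set (hweight.integrableOn_annulus (by positivity) hR1)
          (Filter.Eventually.of_forall fun ω => by positivity)
          (ball_subset_closedBall.trans hballA).eventuallyLE
    _ ≤ M * (4 / t) ^ N := harea (4 / t) (by rw [div_lt_div_iff₀ (by linarith) hz0]; linarith)

theorem norm_le_of_weighted_area_bound (hg : DifferentiableOn ℂ g PuncturedDisk)
    (hp : p ≤ 0) (hR1 : R < 1)
    (harea : ∀ r : ℝ, 1 / R < r →
      ∫ ω in {ω : ℂ | 1 / r < ‖ω‖ ∧ ‖ω‖ < R}, ‖ω‖ ^ p * ‖g ω‖ ^ 2 ≤ M * r ^ N)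
    {z : ℂ} (hz0 : 0 < ‖z‖) (hzR : ‖z‖ ≤ R / 2) :
    ‖g z‖ ≤ √(4 ^ (N + 1) * M / π) * ‖z‖ ^ (-(N / 2 + 1)) := by
  have harea_z := sq_norm_mul_area_le_of_weighted_area_bound hg hp hR1 harea hz0 hzR
  set t := ‖z‖
  have hsq : ‖g z‖ ^ 2 ≤ 4 ^ (N + 1) * M / π * t ^ (-(N + 2)) := by
    rw [Real.div_rpow (by norm_num) hz0.le, ← le_div_iff₀ (by positivity)] at harea_z
    rw [Real.rpow_add (by norm_num), Real.rpow_one, Real.rpow_neg hz0.le, Real.rpow_add hz0,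
      Real.rpow_two]
    calc ‖g z‖ ^ 2 ≤ _ := harea_z
      _ = _ := by field_simp; ring
  calc ‖g z‖ = √(‖g z‖ ^ 2) := (Real.sqrt_sq (norm_nonneg _)).symm
    _ ≤ √(4 ^ (N + 1) * M / π * t ^ (-(N + 2))) := Real.sqrt_le_sqrt hsq
    _ = √(4 ^ (N + 1) * M / π) * t ^ (-(N / 2 + 1)) := by
        rw [Real.sqrt_mul' _ (by positivity), Real.sqrt_eq_rpow (t ^ _), ← Real.rpow_mul hz0.le]
        ring_nf

end AreaBound

section Ray

variable {α q C s : ℝ} {ψ : ℂ → ℂ}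

theorem rpow_mul_norm_comp_ofReal_mul_le (hψ : DifferentiableOn ℂ ψ PuncturedDisk) (hs1 : s < 1)
    (hq : α - 1 ≤ q)
    (hbound : ∀ z : ℂ, 0 < ‖z‖ → ‖z‖ ≤ s → ‖eulerOperator α ψ z‖ ≤ C * ‖z‖ ^ (-q))
    {ζ : ℂ} (hζ : ‖ζ‖ = 1) {t : ℝ} (ht0 : 0 < t) (hts : t ≤ s) :
    t ^ α * ‖ψ (t * ζ)‖ ≤ s ^ α * ‖ψ (s * ζ)‖ + C * s * t ^ (α - (q + 1)) := by
  have hnorm : ∀ u : ℝ, 0 < u → ‖(u : ℂ) * ζ‖ = u := fun u hu => by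
    rw [norm_mul, hζ, mul_one, Complex.norm_real, Real.norm_of_nonneg hu.le]
  have hC : 0 ≤ C := by
    have h := (norm_nonneg _).trans (hbound (t * ζ) (by rwa [hnorm t ht0]) (by rwa [hnorm t ht0]))
    exact nonneg_of_mul_nonneg_left h (Real.rpow_pos_of_pos (by rwa [hnorm t ht0]) _)
  have hderiv : ∀ u ∈ Icc t s, HasDerivAt (fun v : ℝ => v ^ α • ψ (v * ζ))
      (u ^ (α - 1) • eulerOperator α ψ (u * ζ)) u := fun u hu_mem => by
    have hu : 0 < u := ht0.trans_le hu_mem.1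
    refine hasDerivAt_rpow_smul_comp_ofReal_mul hu (hψ.differentiableAt ?_)
    exact isOpen_puncturedDisk.mem_nhds ⟨by rwa [hnorm u hu], by linarith [hnorm u hu, hu_mem.2]⟩
  have hderiv_le : ∀ u ∈ Ico t s, ‖u ^ (α - 1) • eulerOperator α ψ (u * ζ)‖
      ≤ C * t ^ (α - (q + 1)) := fun u hu_mem => by
    have hu : 0 < u := ht0.trans_le hu_mem.1
    have hbound_u := hbound _ (by rwa [hnorm u hu]) (by rw [hnorm u hu]; linarith [hu_mem.2])
    rw [hnorm u hu] at hbound_u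
    calc ‖u ^ (α - 1) • eulerOperator α ψ (u * ζ)‖
        = u ^ (α - 1) * ‖eulerOperator α ψ (u * ζ)‖ := by
          rw [norm_smul, Real.norm_of_nonneg (Real.rpow_nonneg hu.le _)]
      _ ≤ u ^ (α - 1) * (C * u ^ (-q)) := by gcongr
      _ = C * u ^ (α - (q + 1)) := by
          rw [show α - (q + 1) = α - 1 + -q by ring, Real.rpow_add hu]; ring
      _ ≤ C * t ^ (α - (q + 1)) :=
          mul_le_mul_of_nonneg_left (Real.rpow_le_rpow_of_nonpos ht0 hu_mem.1 (by linarith)) hC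
  have hmvt := norm_image_sub_le_of_norm_deriv_le_segment'
    (fun u hu => (hderiv u hu).hasDerivWithinAt) hderiv_le s ⟨hts, le_rfl⟩
  have hnorm_smul : ∀ u : ℝ, 0 < u → ‖u ^ α • ψ (u * ζ)‖ = u ^ α * ‖ψ (u * ζ)‖ := fun u hu => by
    rw [norm_smul, Real.norm_of_nonneg (Real.rpow_nonneg hu.le _)]
  rw [← hnorm_smul t ht0, ← hnorm_smul s (ht0.trans_le hts)]
  calc ‖t ^ α • ψ (t * ζ)‖ ≤ ‖s ^ α • ψ (s * ζ)‖ + ‖t ^ α • ψ (t * ζ) - s ^ α • ψ (s * ζ)‖ :=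
        norm_le_norm_add_norm_sub' _ _
    _ ≤ ‖s ^ α • ψ (s * ζ)‖ + C * t ^ (α - (q + 1)) * (s - t) :=
        add_le_add le_rfl ((norm_sub_rev _ _).trans_le hmvt)
    _ ≤ ‖s ^ α • ψ (s * ζ)‖ + C * s * t ^ (α - (q + 1)) := by
        rw [mul_right_comm]
        gcongr
        linarith

theorem exists_rpow_mul_norm_le_of_norm_eulerOperator_le (hψ : DifferentiableOn ℂ ψ PuncturedDisk)
    (hs0 : 0 < s) (hs1 : s < 1) (hq : α - 1 ≤ q)
    (hbound : ∀ z : ℂ, 0 < ‖z‖ → ‖z‖ ≤ s → ‖eulerOperator α ψ z‖ ≤ C * ‖z‖ ^ (-q)) :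
    ∃ B ≥ 0, ∀ ω : ℂ, 0 < ‖ω‖ → ‖ω‖ ≤ s →
      ‖ω‖ ^ α * ‖ψ ω‖ ≤ B + C * s * ‖ω‖ ^ (α - (q + 1)) := by
  have hsphere : sphere (0 : ℂ) s ⊆ PuncturedDisk := fun z hz => by
    rw [mem_sphere_zero_iff_norm] at hz
    exact ⟨hz ▸ hs0, hz ▸ hs1⟩
  obtain ⟨B, hB⟩ := (isCompact_sphere (0 : ℂ) s).exists_bound_of_continuousOn
    (hψ.continuousOn.mono hsphere)
  refine ⟨s ^ α * max B 0, by positivity, fun ω hω0 hωs => ?_⟩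
  set ζ := ω / ‖ω‖
  have hζ : ‖ζ‖ = 1 := by
    rw [norm_div, Complex.norm_real, Real.norm_of_nonneg hω0.le, div_self hω0.ne']
  have hω : (‖ω‖ : ℂ) * ζ = ω := mul_div_cancel₀ ω (Complex.ofReal_ne_zero.2 hω0.ne')
  have hψ_sphere : ‖ψ (s * ζ)‖ ≤ max B 0 := le_max_of_le_left <| hB _ <| by
    rw [mem_sphere_zero_iff_norm, norm_mul, hζ, mul_one, Complex.norm_real,
      Real.norm_of_nonneg hs0.le]
  have hray := rpow_mul_norm_comp_ofReal_mul_le hψ hs1 hq hbound hζ hω0 hωs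
  rw [hω] at hray
  exact hray.trans (by gcongr)

end Ray

theorem pow_mul_le_add_of_rpow_mul_le {t x α m A B : ℝ} {k : ℕ} (ht0 : 0 < t) (ht1 : t ≤ 1)
    (hA : 0 ≤ A) (hB : 0 ≤ B) (hαk : α ≤ k) (hmk : m ≤ k)
    (h : t ^ α * x ≤ A + B * t ^ (α - m)) : t ^ k * x ≤ A + B := by
  have hsplit : ∀ a : ℝ, t ^ (k - a) * t ^ a = t ^ k := fun a => by
    rw [← Real.rpow_add ht0, sub_add_cancel, Real.rpow_natCast]
  calc t ^ k * x = t ^ ((k : ℝ) - α) * (t ^ α * x) := by rw [← mul_assoc, hsplit]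
    _ ≤ t ^ ((k : ℝ) - α) * (A + B * t ^ (α - m)) := by gcongr
    _ = t ^ ((k : ℝ) - α) * A + B * t ^ ((k : ℝ) - m) := by
        rw [mul_add, mul_left_comm, ← Real.rpow_add ht0, sub_add_sub_cancel]
    _ ≤ A + B := add_le_add
        (mul_le_of_le_one_left hA (Real.rpow_le_one ht0.le ht1 (sub_nonneg.2 hαk)))
        (mul_le_of_le_one_right hB (Real.rpow_le_one ht0.le ht1 (sub_nonneg.2 hmk)))

theorem polynomial_area_growth_implies_meromorphic_general
    (α : ℝ) (hα1 : α < 1)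
    (ψ : ℂ → ℂ) (hψ : DifferentiableOn ℂ ψ PuncturedDisk)
    (R M N : ℝ) (hR0 : 0 < R) (hR1 : R < 1) (hN : 0 ≤ N)
    (harea : ∀ r : ℝ, 1 / R < r →
      (∫ ω in {ω : ℂ | 1 / r < ‖ω‖ ∧ ‖ω‖ < R},
        ‖ω‖ ^ (2 * (α - 1)) * ‖(α : ℂ) * ψ ω + ω * deriv ψ ω‖ ^ 2) ≤ M * r ^ N) :
    ∃ k : ℕ, ∃ ε > 0, ∃ C : ℝ, ∀ ω : ℂ, 0 < ‖ω‖ → ‖ω‖ < ε →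
      ‖ψ ω * ω ^ k‖ ≤ C := by
  set C := √(4 ^ (N + 1) * M / π)
  have hbound : ∀ z : ℂ, 0 < ‖z‖ → ‖z‖ ≤ R / 2 →
      ‖eulerOperator α ψ z‖ ≤ C * ‖z‖ ^ (-(N / 2 + 1)) := fun z =>
    norm_le_of_weighted_area_bound (hψ.eulerOperator isOpen_puncturedDisk) (by linarith) hR1 harea
  obtain ⟨B, hB0, hB⟩ := exists_rpow_mul_norm_le_of_norm_eulerOperator_le hψ (half_pos hR0)
    (by linarith) (by linarith) hbound
  refine ⟨⌈N / 2⌉₊ + 2, R / 2, half_pos hR0, B + C * (R / 2), fun ω hω0 hωR => ?_⟩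
  rw [norm_mul, norm_pow, mul_comm]
  exact pow_mul_le_add_of_rpow_mul_le hω0 (by linarith) hB0 (by positivity)
    (by push_cast; linarith) (by push_cast; linarith [Nat.le_ceil (N / 2)]) (hB ω hω0 hωR.le)

/-- If α ∈ (0,1), ψ is holomorphic on Δ*, and the weighted area integrals
∬_{1/r<|ω|<R} |ω|^{2(α-1)} |αψ + ωψ'|² satisfy a polynomial growth bound M rᴺ,
then 0 is not an essential singularity of ψ: ψ(ω)·ω^k is bounded near 0 for some k. -/
theorem polynomial_area_growth_implies_meromorphic
    (α : ℝ) (hα : 0 < α) (hα1 : α < 1)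
    (ψ : ℂ → ℂ) (hψ : DifferentiableOn ℂ ψ PuncturedDisk)
    (R M N : ℝ) (hR0 : 0 < R) (hR1 : R < 1) (hM : 0 < M) (hN : 0 ≤ N)
    (harea : ∀ r : ℝ, 1 / R < r →
      (∫ ω in {ω : ℂ | 1 / r < ‖ω‖ ∧ ‖ω‖ < R},
        ‖ω‖ ^ (2 * (α - 1)) * ‖(α : ℂ) * ψ ω + ω * deriv ψ ω‖ ^ 2) ≤ M * r ^ N) :
    ∃ k : ℕ, ∃ ε > 0, ∃ C : ℝ, ∀ ω : ℂ, 0 < ‖ω‖ → ‖ω‖ < ε →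
      ‖ψ ω * ω ^ k‖ ≤ C :=
  polynomial_area_growth_implies_meromorphic_general α hα1 ψ hψ R M N hR0 hR1 hN harea
end

section
/- Let β, β̃ ∈ ℝ with β, β̃ ≠ -1, and let h be a holomorphic function on a neighborhood of 0 with h(0) ≠ 0. If (β̃+1)² |zh(z)|^{2β̃} |zh'(z) + h(z)|² = (β+1)² |z|^{2β} for all z in a punctured neighborhood of 0, then β̃ = β. -/
open Complex Metric Filter Topology

/-! Off `z = 0` the hypothesis says `|z|^(2(β̃ - β)) = (β + 1)² / g z`, where
`g z = (β̃ + 1)² |h z|^(2β̃) |z h' z + h z|²` is continuous at `0` with `g 0 ≠ 0`.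
So a power of `|z|` has a finite nonzero limit at `0`, which forces the exponent to vanish. -/

theorem eq_zero_of_tendsto_rpow {α : Type*} {l : Filter α} [l.NeBot] {r : α → ℝ}
    (hr : Tendsto r l (𝓝[>] 0)) {c a : ℝ} (ha : a ≠ 0)
    (h : Tendsto (fun x => r x ^ c) l (𝓝 a)) : c = 0 := by
  rcases lt_trichotomy c 0 with hc | hc | hc
  · exact absurd h
      (not_tendsto_nhds_of_tendsto_atTop ((tendsto_rpow_neg_nhdsGT_zero hc).comp hr) a)
  · exact hc
  · have h0 : Tendsto (fun x => r x ^ c) l (𝓝 0) := by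
      have hcont := (Real.continuousAt_rpow_const 0 c (Or.inr hc.le)).tendsto
      rw [Real.zero_rpow hc.ne'] at hcont
      exact hcont.comp (hr.mono_right nhdsWithin_le_nhds)
    exact absurd (tendsto_nhds_unique h h0) ha

theorem div_eq_rpow_sub_of_rpow_mul_eq {r a b K g : ℝ} (hr : 0 < r) (hK : K ≠ 0)
    (h : r ^ a * g = K * r ^ b) : K / g = r ^ (a - b) := by
  have hg : g ≠ 0 := by
    rintro rfl
    exact mul_ne_zero hK (Real.rpow_pos_of_pos hr b).ne' (by rw [← h, mul_zero])
  rw [Real.rpow_sub hr, div_eq_div_iff hg (Real.rpow_pos_of_pos hr b).ne', ← h]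

/-- The cone exponent β in the form (β+1)²|z|^{2β}|dz|² is unique: a coordinate change
z̃ = zh(z) with h(0) ≠ 0 preserving this form forces β̃ = β. -/
theorem cone_exponent_unique
    (β βt : ℝ) (hβ : β ≠ -1) (hβt : βt ≠ -1)
    (ε : ℝ) (hε : 0 < ε)
    (h : ℂ → ℂ) (hh : DifferentiableOn ℂ h (ball 0 ε)) (hh0 : h 0 ≠ 0)
    (δ : ℝ) (hδ : 0 < δ)
    (heq : ∀ z : ℂ, 0 < ‖z‖ → ‖z‖ < δ →
      (βt + 1) ^ 2 * ‖z * h z‖ ^ (2 * βt) * ‖z * deriv h z + h z‖ ^ 2 =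
        (β + 1) ^ 2 * ‖z‖ ^ (2 * β)) :
    βt = β := by
  set g : ℂ → ℝ := fun z => (βt + 1) ^ 2 * ‖h z‖ ^ (2 * βt) * ‖z * deriv h z + h z‖ ^ 2
  have hK : (β + 1) ^ 2 ≠ 0 := pow_ne_zero 2 fun h0 => hβ (eq_neg_of_add_eq_zero_left h0)
  have ha : AnalyticAt ℂ h 0 := hh.analyticAt (ball_mem_nhds 0 hε)
  have hg : ContinuousAt g 0 :=
    (continuousAt_const.mul (ha.continuousAt.norm.rpow_const
      (Or.inl (norm_ne_zero_iff.2 hh0)))).mul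
      (((analyticAt_id.mul ha.deriv).add ha).continuousAt.norm.pow 2)
  have hg0 : g 0 ≠ 0 := by
    have : βt + 1 ≠ 0 := fun h0 => hβt (eq_neg_of_add_eq_zero_left h0)
    simp [g, this, hh0, (Real.rpow_pos_of_pos (norm_pos_iff.2 hh0) _).ne']
  have hpow : ∀ᶠ z in 𝓝[≠] (0 : ℂ), (β + 1) ^ 2 / g z = ‖z‖ ^ (2 * βt - 2 * β) := by
    filter_upwards [self_mem_nhdsWithin, nhdsWithin_le_nhds (ball_mem_nhds 0 hδ)] with z hz0 hzδ
    have hz : 0 < ‖z‖ := norm_pos_iff.2 hz0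
    refine div_eq_rpow_sub_of_rpow_mul_eq hz hK ?_
    rw [← heq z hz (mem_ball_zero_iff.1 hzδ), norm_mul, Real.mul_rpow hz.le (norm_nonneg _)]
    ring
  have hlim : Tendsto (fun z : ℂ => ‖z‖ ^ (2 * βt - 2 * β)) (𝓝[≠] 0) (𝓝 ((β + 1) ^ 2 / g 0)) :=
    (tendsto_const_nhds.div (hg.tendsto.mono_left nhdsWithin_le_nhds) hg0).congr' hpow
  have hexp := eq_zero_of_tendsto_rpow tendsto_norm_nhdsNE_zero (div_ne_zero hK hg0) hlim
  linarith
end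

section
/- Let β < -1, β ∉ ℤ, and let h be holomorphic near 0 with h(0) ≠ 0. Suppose ζ₀ ∈ ℂ, |λ₁| = 1, and h(z)^{β+1} - λ₁ = ζ₀ z^{-(β+1)} on a punctured neighborhood of 0 (with fixed branches). Then ζ₀ = 0 and h is a unimodular constant. -/
/-!
Near `0` the quotient `h / h 0` lies in the slit plane, so `(h / h 0) ^ e` is a continuous branch
of `h ^ e`, and `h ^ e / (h / h 0) ^ e` takes values in the countable set `h 0 ^ e · exp (2πi e ℤ)`.
On the connected slit disc the continuous function `(λ₁ + ζ₀ z ^ (-e)) / (h / h 0) ^ e` is therefore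
a constant `c`, so `ζ₀ z ^ (-e) = c (h / h 0) ^ e - λ₁` extends continuously across the negative
axis. Going once around a circle multiplies `z ^ (-e)` by `exp (-2πi e) ≠ 1`, since `e = β + 1 ∉ ℤ`;
hence `ζ₀ = 0`. Then `‖h‖ ^ (β + 1) = ‖λ₁‖ = 1`, so `‖h‖ ≡ 1` and by the maximum modulus principle
`h` is constant.
-/

open Complex Metric Set
open scoped Real

namespace Complex

theorem dense_slitPlane : Dense slitPlane :=
  ((dense_compl_singleton (0 : ℝ)).preimage isOpenMap_im).mono
    fun _ hz => mem_slitPlane_iff.2 (Or.inr hz)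

theorem isPreconnected_ball_zero_inter_slitPlane (r : ℝ) :
    IsPreconnected (ball (0 : ℂ) r ∩ slitPlane) := by
  rcases le_or_gt r 0 with hr | hr
  · simp [ball_eq_empty.2 hr, isPreconnected_empty]
  have hmem : ((r / 2 : ℝ) : ℂ) ∈ ball (0 : ℂ) r := by
    rw [mem_ball_zero_iff, norm_real, Real.norm_of_nonneg (by positivity)]
    linarith
  exact ((((convex_ball 0 r).starConvex hmem).inter
    (starConvex_ofReal_slitPlane (by positivity))).isPathConnected
      ⟨hmem, ofReal_mem_slitPlane.2 (by positivity)⟩).isConnected.isPreconnected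

theorem log_circleMap_zero {ρ θ : ℝ} (hρ : 0 < ρ) (hθ : θ ∈ Ioc (-π) π) :
    log (circleMap 0 ρ θ) = Real.log ρ + θ * I := by
  rw [circleMap_zero, log_ofReal_mul hρ (exp_ne_zero _), log_exp] <;> simp [hθ.1, hθ.2]

theorem circleMap_zero_mem_slitPlane {ρ θ : ℝ} (hρ : 0 < ρ) (hθ : θ ∈ Ioo (-π) π) :
    circleMap 0 ρ θ ∈ slitPlane := by
  have harg : arg (circleMap 0 ρ θ) = θ := by
    rw [← log_im, log_circleMap_zero hρ (Ioo_subset_Ioc_self hθ)]; simp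
  exact mem_slitPlane_iff_arg.2 ⟨harg.symm ▸ hθ.2.ne, circleMap_ne_center hρ.ne'⟩

theorem circleMap_zero_cpow {ρ θ : ℝ} (hρ : 0 < ρ) (hθ : θ ∈ Ioc (-π) π) (s : ℂ) :
    circleMap 0 ρ θ ^ s = (ρ : ℂ) ^ s * exp (θ * s * I) := by
  rw [cpow_def_of_ne_zero (circleMap_ne_center hρ.ne'),
    cpow_def_of_ne_zero (ofReal_ne_zero.2 hρ.ne'), log_circleMap_zero hρ hθ, ← exp_add,
    ofReal_log hρ.le]
  ring_nf

theorem exists_int_cpow_eq {w b : ℂ} (hw : w ≠ 0) (hb : b ≠ 0) (e : ℂ) :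
    ∃ n : ℤ, w ^ e = (w / b) ^ e * (b ^ e * exp (n * (2 * π * I) * e)) := by
  obtain ⟨n, hn⟩ := exp_eq_exp_iff_exists_int.1
    (show exp (log w) = exp (log (w / b) + log b) by
      rw [exp_add, exp_log hw, exp_log (div_ne_zero hw hb), exp_log hb, div_mul_cancel₀ _ hb])
  refine ⟨n, ?_⟩
  rw [cpow_def_of_ne_zero hw, cpow_def_of_ne_zero (div_ne_zero hw hb), cpow_def_of_ne_zero hb,
    hn, ← exp_add, ← exp_add]
  ring_nf

theorem norm_eq_one_of_cpow_ofReal_eq {x : ℝ} (hx : x ≠ 0) {w lam : ℂ} (hlam : ‖lam‖ = 1)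
    (h : w ^ (x : ℂ) = lam) : ‖w‖ = 1 := by
  have : ‖w‖ ^ x = (1 : ℝ) ^ x := by rw [← norm_cpow_real, h, hlam, Real.one_rpow]
  exact Real.rpow_left_injOn hx (norm_nonneg _) (by norm_num) this

theorem eq_zero_of_eqOn_mul_exp_of_continuous {g : ℝ → ℂ} (hg : Continuous g)
    (hπ : g (-π) = g π) {a c : ℂ} (ha : ∀ n : ℤ, a ≠ n)
    (heq : EqOn g (fun θ => c * exp (θ * a * I)) (Ioo (-π) π)) : c = 0 := by
  have hIcc : EqOn g (fun θ => c * exp (θ * a * I)) (Icc (-π) π) :=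
    heq.of_subset_closure hg.continuousOn (by fun_prop) Ioo_subset_Icc_self
      (by rw [closure_Ioo (by linarith [Real.pi_pos])])
  have hends : c * (exp (π * a * I) - exp (-π * a * I)) = 0 := by
    have h1 := hIcc (right_mem_Icc.2 (by linarith [Real.pi_pos]))
    have h2 := hIcc (left_mem_Icc.2 (by linarith [Real.pi_pos]))
    push_cast at h1 h2
    linear_combination h2 - h1 - hπ
  refine (mul_eq_zero.1 hends).resolve_right (sub_ne_zero.2 fun hexp => ?_)
  obtain ⟨n, hn⟩ := exp_eq_exp_iff_exists_int.1 hexp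
  apply ha n
  have : (2 * π * I : ℂ) ≠ 0 := by simp [Real.pi_ne_zero]
  apply mul_right_cancel₀ this
  linear_combination hn

theorem eq_zero_of_mul_cpow_eqOn_ball_inter_slitPlane {G : ℂ → ℂ} {r : ℝ} (hr : 0 < r)
    (hG : ContinuousOn G (ball 0 r)) {s ζ : ℂ} (hs : ∀ n : ℤ, s ≠ n)
    (heq : ∀ z ∈ ball 0 r ∩ slitPlane, G z = ζ * z ^ s) : ζ = 0 := by
  have hρ : 0 < r / 2 := by positivity
  have hcircle : ∀ θ, circleMap 0 (r / 2) θ ∈ ball (0 : ℂ) r := fun θ => by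
    rw [mem_ball_zero_iff, norm_circleMap_zero, abs_of_pos hρ]; linarith
  have hcoef : ζ * ((r / 2 : ℝ) : ℂ) ^ s = 0 := by
    refine eq_zero_of_eqOn_mul_exp_of_continuous (g := G ∘ circleMap 0 (r / 2))
      (hG.comp_continuous (continuous_circleMap 0 (r / 2)) hcircle) ?_ hs fun θ hθ => ?_
    · rw [Function.comp_apply, Function.comp_apply, ← periodic_circleMap 0 (r / 2) (-π)]
      ring_nf
    · rw [Function.comp_apply, heq _ ⟨hcircle θ, circleMap_zero_mem_slitPlane hρ hθ⟩,
        circleMap_zero_cpow hρ (Ioo_subset_Ioc_self hθ), mul_assoc]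
      ring_nf
  simpa [hr.ne', cpow_ne_zero_iff] using hcoef

end Complex

theorem Set.EqOn.of_inter_slitPlane {X : Type*} [TopologicalSpace X] [T2Space X] {U : Set ℂ}
    {f g : ℂ → X} (hU : IsOpen U) (hf : ContinuousOn f U) (hg : ContinuousOn g U)
    (h : EqOn f g (U ∩ slitPlane)) : EqOn f g U :=
  h.of_subset_closure hf hg inter_subset_left (dense_slitPlane.open_subset_closure_inter hU)

theorem IsPreconnected.exists_eqOn_const_mul_cpow_div {X : Type*} [TopologicalSpace X]
    {S : Set X} (hS : IsPreconnected S) {F h : X → ℂ} {b e : ℂ} (hb : b ≠ 0)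
    (hF : ContinuousOn F S) (hh : ContinuousOn h S) (hslit : ∀ z ∈ S, h z / b ∈ slitPlane)
    (hFh : ∀ z ∈ S, F z = h z ^ e) : ∃ c, ∀ z ∈ S, F z = c * (h z / b) ^ e := by
  have hpow_ne : ∀ z ∈ S, (h z / b) ^ e ≠ 0 := fun z hz =>
    cpow_ne_zero_iff.2 (Or.inl (slitPlane_ne_zero (hslit z hz)))
  set Q : X → ℂ := fun z => F z / (h z / b) ^ e
  have hQ : ContinuousOn Q S := hF.div ((hh.div_const b).cpow_const hslit) hpow_ne
  have hQ_mem : MapsTo Q S (range fun n : ℤ => b ^ e * exp (n * (2 * π * I) * e)) := by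
    intro z hz
    have hhz : h z ≠ 0 := left_ne_zero_of_mul (slitPlane_ne_zero (hslit z hz))
    obtain ⟨n, hn⟩ := exists_int_cpow_eq hhz hb e
    exact ⟨n, by simp only [Q]; rw [hFh z hz, hn, mul_div_cancel_left₀ _ (hpow_ne z hz)]⟩
  have hQ_const : (Q '' S).Subsingleton :=
    (countable_range _).isTotallyDisconnected _ (image_subset_iff.2 hQ_mem) (hS.image Q hQ)
  rcases S.eq_empty_or_nonempty with rfl | ⟨z₀, hz₀⟩
  · exact ⟨0, by simp⟩
  refine ⟨Q z₀, fun z hz => ?_⟩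
  rw [← hQ_const (mem_image_of_mem Q hz) (mem_image_of_mem Q hz₀),
    div_mul_cancel₀ _ (hpow_ne z hz)]

theorem Complex.eq_zero_of_cpow_eq_add_mul_cpow {h : ℂ → ℂ} {δ : ℝ} {e s lam ζ : ℂ}
    (hδ : 0 < δ) (hh : ContinuousOn h (ball 0 δ)) (hh0 : h 0 ≠ 0) (hs : ∀ n : ℤ, s ≠ n)
    (heq : ∀ z ∈ ball 0 δ ∩ slitPlane, h z ^ e = lam + ζ * z ^ s) : ζ = 0 := by
  obtain ⟨r, hr, hrW⟩ :
      ∃ r > 0, ball (0 : ℂ) r ⊆ ball 0 δ ∩ (fun z => h z / h 0) ⁻¹' slitPlane :=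
    Metric.isOpen_iff.1 ((hh.div_const _).isOpen_inter_preimage isOpen_ball isOpen_slitPlane) 0
      ⟨mem_ball_self hδ, by simp [hh0, one_mem_slitPlane]⟩
  have hball : ball (0 : ℂ) r ⊆ ball 0 δ := fun z hz => (hrW hz).1
  have hpow : ContinuousOn (fun z => (h z / h 0) ^ e) (ball 0 r) :=
    ((hh.mono hball).div_const _).cpow_const fun z hz => (hrW hz).2
  obtain ⟨c, hc⟩ := (isPreconnected_ball_zero_inter_slitPlane r).exists_eqOn_const_mul_cpow_div
    (F := fun z => lam + ζ * z ^ s) hh0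
    (fun z hz => (continuousAt_const.add
      (continuousAt_const.mul (continuousAt_cpow_const hz.2))).continuousWithinAt)
    (hh.mono (inter_subset_left.trans hball)) (fun z hz => (hrW hz.1).2)
    (fun z hz => (heq z ⟨hball hz.1, hz.2⟩).symm)
  refine eq_zero_of_mul_cpow_eqOn_ball_inter_slitPlane hr
    (G := fun z => c * (h z / h 0) ^ e - lam)
    ((continuousOn_const.mul hpow).sub continuousOn_const) hs fun z hz => ?_
  rw [← hc z hz]
  ring

theorem coordinate_change_beta_lt_neg_one_nonint_general
    (β : ℝ) (hβZ : ∀ m : ℤ, (m : ℝ) ≠ β)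
    (ε : ℝ)
    (h : ℂ → ℂ) (hh : DifferentiableOn ℂ h (ball 0 ε)) (hh0 : h 0 ≠ 0)
    (ζ₀ lam : ℂ) (hlam : ‖lam‖ = 1)
    (δ : ℝ) (hδ : 0 < δ) (hδε : δ ≤ ε)
    (heq : ∀ z : ℂ, 0 < ‖z‖ → ‖z‖ < δ → (0 < z.re ∨ z.im ≠ 0) →
      h z ^ ((β : ℂ) + 1) - lam = ζ₀ * z ^ (-((β : ℂ) + 1))) :
    ζ₀ = 0 ∧ ‖h 0‖ = 1 ∧ Set.EqOn h (fun _ => h 0) (ball 0 δ) := by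
  have hdiff : DifferentiableOn ℂ h (ball 0 δ) := hh.mono (ball_subset_ball hδε)
  have hslit : ∀ z ∈ ball (0 : ℂ) δ ∩ slitPlane,
      h z ^ ((β : ℂ) + 1) = lam + ζ₀ * z ^ (-((β : ℂ) + 1)) := fun z ⟨hz, hzs⟩ => by
    rw [← heq z (norm_pos_iff.2 (slitPlane_ne_zero hzs)) (mem_ball_zero_iff.1 hz)
      (mem_slitPlane_iff.1 hzs)]
    ring
  have hζ : ζ₀ = 0 := by
    refine eq_zero_of_cpow_eq_add_mul_cpow hδ hdiff.continuousOn hh0 (fun n hn => ?_) hslit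
    exact hβZ (-n - 1) (by exact_mod_cast congrArg re (show ((-n - 1 : ℤ) : ℂ) = β by
      push_cast; linear_combination hn))
  have hnorm : EqOn (fun z => ‖h z‖) 1 (ball 0 δ) := by
    refine EqOn.of_inter_slitPlane isOpen_ball hdiff.continuousOn.norm continuousOn_const
      fun z hz => norm_eq_one_of_cpow_ofReal_eq (x := β + 1) ?_ hlam ?_
    · exact fun h0 => hβZ (-1) (by push_cast; linarith)
    · simpa [hζ] using hslit z hz
  refine ⟨hζ, hnorm (mem_ball_self hδ), ?_⟩
  exact Complex.eqOn_of_isPreconnected_of_isMaxOn_norm (convex_ball 0 δ).isPreconnected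
    isOpen_ball hdiff (mem_ball_self hδ) fun z hz => by
      simp [hnorm hz, hnorm (mem_ball_self hδ)]

/-- For β < -1, β ∉ ℤ: if h(z)^{β+1} - λ₁ = ζ₀ z^{-(β+1)} near 0 (principal branch
powers on a slit punctured neighborhood), with h holomorphic, h(0) ≠ 0, |λ₁| = 1,
then ζ₀ = 0 and h is a unimodular constant. -/
theorem coordinate_change_beta_lt_neg_one_nonint
    (β : ℝ) (hβ : β < -1) (hβZ : ∀ m : ℤ, (m : ℝ) ≠ β)
    (ε : ℝ) (hε : 0 < ε)
    (h : ℂ → ℂ) (hh : DifferentiableOn ℂ h (ball 0 ε)) (hh0 : h 0 ≠ 0)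
    (ζ₀ lam : ℂ) (hlam : ‖lam‖ = 1)
    (δ : ℝ) (hδ : 0 < δ) (hδε : δ ≤ ε)
    (heq : ∀ z : ℂ, 0 < ‖z‖ → ‖z‖ < δ → (0 < z.re ∨ z.im ≠ 0) →
      h z ^ ((β : ℂ) + 1) - lam = ζ₀ * z ^ (-((β : ℂ) + 1))) :
    ζ₀ = 0 ∧ ‖h 0‖ = 1 ∧ Set.EqOn h (fun _ => h 0) (ball 0 δ) :=
  coordinate_change_beta_lt_neg_one_nonint_general β hβZ ε h hh hh0 ζ₀ lam hlam δ hδ hδε heq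
end

section
/- Let c, c̃ be nonzero complex numbers, λ a unimodular complex number, ζ₀ ∈ ℂ, and h holomorphic near 0 with h(0) ≠ 0. If c̃ log(z h(z)) = λ c log z + ζ₀ holds on a punctured slit neighborhood of 0 (for fixed branches of the logarithms), then λ = c̃/c (in particular |c̃| = |c|), and h is constant. -/
open Complex Metric Filter Topology Asymptotics

/-!
For small real `t > 0` the hypothesis reads `(c̃ - λc) log t = ζ₀ - c̃ log h(t)`. The right side
stays bounded as `t → 0⁺` because `h(t) → h(0) ≠ 0`, while `log t` does not, so `c̃ = λc`. Then
`h(t) = exp (ζ₀ / c̃)` for small `t > 0`, and the identity theorem makes `h` constant.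
-/

theorem Complex.isBigO_log_comp_one_of_tendsto {α : Type*} {l : Filter α} {g : α → ℂ} {w : ℂ}
    (hg : Tendsto g l (𝓝 w)) (hw : w ≠ 0) : (fun x => log (g x)) =O[l] (fun _ => (1 : ℝ)) := by
  have hre : (fun x => (Real.log ‖g x‖ : ℂ)) =O[l] (fun _ => (1 : ℝ)) :=
    (hg.norm.log (norm_ne_zero_iff.2 hw)).ofReal.isBigO_one ℝ
  have him : (fun x => (arg (g x) : ℂ) * I) =O[l] (fun _ => (1 : ℝ)) :=
    IsBigO.of_bound Real.pi <| Eventually.of_forall fun x => by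
      simpa using abs_arg_le_pi (g x)
  exact hre.add him

theorem eq_zero_of_isBigO_mul_log {a : ℂ}
    (h : (fun t : ℝ => a * Real.log t) =O[𝓝[>] 0] (fun _ => (1 : ℝ))) : a = 0 := by
  by_contra ha
  have hlog : (fun t : ℝ => Real.log t) =O[𝓝[>] 0] (fun _ => (1 : ℝ)) := by
    rw [← isBigO_ofReal_left]
    exact (isBigO_const_mul_left_iff ha).1 h
  exact not_isBoundedUnder_of_tendsto_atTop
    (tendsto_abs_atBot_atTop.comp Real.tendsto_log_nhdsGT_zero) ((isBigO_one_iff ℝ).1 hlog)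

theorem Filter.Eventually.frequently_nhdsNE_zero_of_ofReal {p : ℂ → Prop}
    (h : ∀ᶠ t : ℝ in 𝓝[>] 0, p t) : ∃ᶠ z in 𝓝[≠] (0 : ℂ), p z := by
  have hofReal : Tendsto ((↑) : ℝ → ℂ) (𝓝[>] 0) (𝓝[≠] 0) := by
    refine tendsto_nhdsWithin_of_tendsto_nhds_of_eventually_within _ ?_ ?_
    · exact (continuous_ofReal.tendsto' 0 0 ofReal_zero).mono_left nhdsWithin_le_nhds
    · filter_upwards [self_mem_nhdsWithin] with t ht
      exact ofReal_ne_zero.2 ht.ne'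
  exact hofReal.frequently h.frequently

theorem log_developing_maps_compare_general
    (c ct : ℂ) (hc : c ≠ 0) (hct : ct ≠ 0)
    (lam : ℂ) (hlam : ‖lam‖ = 1) (ζ₀ : ℂ)
    (ε : ℝ)
    (h : ℂ → ℂ) (hh : DifferentiableOn ℂ h (ball 0 ε)) (hh0 : h 0 ≠ 0)
    (δ : ℝ) (hδ : 0 < δ) (hδε : δ ≤ ε)
    (heq : ∀ z : ℂ, 0 < ‖z‖ → ‖z‖ < δ → (0 < z.re ∨ z.im ≠ 0) →
      ct * Complex.log (z * h z) = lam * c * Complex.log z + ζ₀) :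
    lam = ct / c ∧ ‖ct‖ = ‖c‖ ∧ Set.EqOn h (fun _ => h 0) (ball 0 δ) := by
  have hε : 0 < ε := hδ.trans_le hδε
  have hlim : Tendsto (fun t : ℝ => h t) (𝓝[>] 0) (𝓝 (h 0)) :=
    ((hh.continuousOn.continuousAt (ball_mem_nhds 0 hε)).tendsto.comp
      (continuous_ofReal.tendsto' 0 0 ofReal_zero)).mono_left nhdsWithin_le_nhds
  have hkey : ∀ᶠ t : ℝ in 𝓝[>] 0,
      (ct - lam * c) * Real.log t = ζ₀ - ct * log (h t) := by
    filter_upwards [Ioo_mem_nhdsGT hδ, hlim.eventually_ne hh0] with t ⟨ht0, htδ⟩ hht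
    have hnorm : ‖(t : ℂ)‖ = t := by simp [ht0.le]
    have := heq t (by rwa [hnorm]) (by rwa [hnorm]) (Or.inl (by simpa using ht0))
    rw [log_ofReal_mul ht0 hht, ← ofReal_log ht0.le] at this
    linear_combination this
  have hct_eq : ct = lam * c := by
    refine sub_eq_zero.1 (eq_zero_of_isBigO_mul_log ?_)
    have hbdd := (isBigO_const_one ℝ ζ₀ _).sub
      ((isBigO_log_comp_one_of_tendsto hlim hh0).const_mul_left ct)
    exact hbdd.congr' (hkey.mono fun _ ht => ht.symm) EventuallyEq.rfl
  have hval : ∀ᶠ t : ℝ in 𝓝[>] 0, h t = exp (ζ₀ / ct) := by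
    filter_upwards [hkey, hlim.eventually_ne hh0] with t ht hht
    have hlog : ct * log (h t) = ζ₀ := by linear_combination ht - (Real.log t : ℂ) * hct_eq
    rw [← hlog, mul_div_cancel_left₀ _ hct, exp_log hht]
  have hconst : Set.EqOn h (fun _ => exp (ζ₀ / ct)) (ball 0 ε) :=
    (hh.analyticOnNhd isOpen_ball).eqOn_of_preconnected_of_frequently_eq analyticOnNhd_const
      (convex_ball 0 ε).isPreconnected (mem_ball_self hε) hval.frequently_nhdsNE_zero_of_ofReal
  refine ⟨by rw [hct_eq, mul_div_cancel_right₀ _ hc], by rw [hct_eq, norm_mul, hlam, one_mul], ?_⟩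
  intro z hz
  rw [hconst (ball_subset_ball hδε hz), hconst (mem_ball_self hε)]

/-- If c̃ log(zh(z)) = λ c log z + ζ₀ near 0 (principal logarithm on a slit punctured
neighborhood), with c, c̃ ≠ 0, |λ| = 1 and h holomorphic with h(0) ≠ 0, then λ = c̃/c
(so |c̃| = |c|) and h is constant. -/
theorem log_developing_maps_compare
    (c ct : ℂ) (hc : c ≠ 0) (hct : ct ≠ 0)
    (lam : ℂ) (hlam : ‖lam‖ = 1) (ζ₀ : ℂ)
    (ε : ℝ) (hε : 0 < ε)
    (h : ℂ → ℂ) (hh : DifferentiableOn ℂ h (ball 0 ε)) (hh0 : h 0 ≠ 0)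
    (δ : ℝ) (hδ : 0 < δ) (hδε : δ ≤ ε)
    (heq : ∀ z : ℂ, 0 < ‖z‖ → ‖z‖ < δ → (0 < z.re ∨ z.im ≠ 0) →
      ct * Complex.log (z * h z) = lam * c * Complex.log z + ζ₀) :
    lam = ct / c ∧ ‖ct‖ = ‖c‖ ∧ Set.EqOn h (fun _ => h 0) (ball 0 δ) :=
  log_developing_maps_compare_general c ct hc hct lam hlam ζ₀ ε h hh hh0 δ hδ hδε heq
end

section
/- Let ν, ν̃ > 0, n ≥ 1 an integer, λ a unimodular complex number, ζ₀ ∈ ℂ, and h holomorphic near 0 with h(0) ≠ 0. If ν̃ log z + ν̃ log h(z) + (z h(z))^{-n} = λν log z + λ z^{-n} + ζ₀ on a punctured slit neighborhood of 0 (for fixed branches), then λ = 1 and ν̃ = ν. -/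
/-!
Put `w z = (z h(z))^{-n} - λ z^{-n}`, holomorphic on a punctured disc. On the slit disc the
hypothesis reads `w z = (λν - ν̃) log z + (ζ₀ - ν̃ log h(z))`, the second summand being
bounded, so `|w z| ≤ C |log |z|| + K` there, and by continuity on the whole punctured disc.
Logarithmic growth is `o(1/|z|)`, so the singularity of `w` at `0` is removable and `w` is
bounded near `0`. Along the positive reals `(λν - ν̃) log t` is then bounded as `t → 0⁺`,
forcing `λν = ν̃`; taking norms gives `ν = ν̃`, and then `λ = 1`.
-/

open Complex Metric Filter Topology

lemma Complex.norm_log_le_abs_log_norm_add_pi (z : ℂ) :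
    ‖log z‖ ≤ |Real.log ‖z‖| + Real.pi :=
  calc ‖log z‖ ≤ |(log z).re| + |(log z).im| := norm_le_abs_re_add_abs_im _
    _ ≤ |Real.log ‖z‖| + Real.pi := by
      rw [log_re, log_im]
      exact add_le_add_right (abs_arg_le_pi z) _

lemma Complex.dense_slitPlane_s15 : Dense slitPlane :=
  ((dense_compl_singleton (0 : ℝ)).preimage isOpenMap_im).mono fun _ hz =>
    mem_slitPlane_iff.2 (Or.inr hz)

lemma ContinuousAt.exists_eventually_norm_log_le {X : Type*} [TopologicalSpace X] {h : X → ℂ}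
    {x : X} (hc : ContinuousAt h x) (h0 : h x ≠ 0) :
    ∃ B, ∀ᶠ y in 𝓝 x, ‖Complex.log (h y)‖ ≤ B := by
  have hlog : ContinuousAt (fun y => |Real.log ‖h y‖|) x :=
    (hc.norm.log (norm_ne_zero_iff.2 h0)).abs
  refine ⟨|Real.log ‖h x‖| + 1 + Real.pi, ?_⟩
  filter_upwards [hlog.eventually_lt continuousAt_const (lt_add_one _)] with y hy
  linarith [norm_log_le_abs_log_norm_add_pi (h y)]

lemma Filter.Eventually.nhdsNE_of_nhdsWithin_dense {X α : Type*} [TopologicalSpace X]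
    [T1Space X] [LinearOrder α] [TopologicalSpace α] [OrderClosedTopology α]
    {s : Set X} {x : X} {u v : X → α} (h : ∀ᶠ y in 𝓝[s] x, u y ≤ v y) (hs : Dense s)
    (hu : ∀ᶠ y in 𝓝[≠] x, ContinuousAt u y) (hv : ∀ᶠ y in 𝓝[≠] x, ContinuousAt v y) :
    ∀ᶠ y in 𝓝[≠] x, u y ≤ v y := by
  rw [eventually_nhdsWithin_iff] at hu hv h ⊢
  obtain ⟨U, hU, hUo, hxU⟩ := eventually_nhds_iff.1 (hu.and (hv.and h))
  filter_upwards [hUo.mem_nhds hxU] with y hyU hyx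
  have hy : y ∈ closure (U ∩ {x}ᶜ ∩ s) :=
    hs.open_subset_closure_inter (hUo.inter isOpen_compl_singleton) ⟨hyU, hyx⟩
  exact ContinuousWithinAt.closure_le hy ((hU y hyU).1 hyx).continuousWithinAt
    ((hU y hyU).2.1 hyx).continuousWithinAt fun z hz => (hU z hz.1.1).2.2 hz.2

theorem Complex.exists_tendsto_of_norm_le_mul_abs_log {E : Type*} [NormedAddCommGroup E]
    [NormedSpace ℂ E] [CompleteSpace E] {f : ℂ → E} {c : ℂ} {C K : ℝ}
    (hd : ∀ᶠ z in 𝓝[≠] c, DifferentiableAt ℂ f z)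
    (hb : ∀ᶠ z in 𝓝[≠] c, ‖f z‖ ≤ C * |Real.log ‖z - c‖| + K) :
    ∃ L, Tendsto f (𝓝[≠] c) (𝓝 L) := by
  -- Riemann's criterion: logarithmic growth is `o(1 / |z - c|)`.
  refine ⟨_, tendsto_limUnder_of_differentiable_on_punctured_nhds_of_isLittleO hd ?_⟩
  set φ : ℂ → ℝ := fun z =>
    C * |‖z - c‖ * Real.log ‖z - c‖| + (K + ‖f c‖) * ‖z - c‖
  have hφ : Tendsto φ (𝓝[≠] c) (𝓝 0) := by
    have hφc : Continuous φ := by fun_prop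
    simpa [φ] using (hφc.tendsto c).mono_left nhdsWithin_le_nhds
  rw [← Asymptotics.isLittleO_norm_norm, Asymptotics.isLittleO_iff_tendsto']
  · refine squeeze_zero' (Eventually.of_forall fun z => by positivity) ?_ hφ
    filter_upwards [hb] with z hz
    rw [norm_inv, div_inv_eq_mul]
    calc ‖f z - f c‖ * ‖z - c‖
        ≤ (C * |Real.log ‖z - c‖| + K + ‖f c‖) * ‖z - c‖ := by
          gcongr
          linarith [norm_sub_le (f z) (f c)]
      _ = φ z := by simp only [φ, abs_mul, abs_norm]; ring
  · filter_upwards [self_mem_nhdsWithin] with z hz hz0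
    simp [sub_eq_zero.not.2 hz] at hz0

lemma Real.nonpos_of_eventually_mul_abs_log_le {C B : ℝ}
    (h : ∀ᶠ t in 𝓝[>] (0 : ℝ), C * |Real.log t| ≤ B) : C ≤ 0 := by
  by_contra! hC
  have hlim : Tendsto (fun t => C * |Real.log t|) (𝓝[>] 0) atTop :=
    (tendsto_abs_atBot_atTop.comp Real.tendsto_log_nhdsGT_zero).const_mul_atTop hC
  obtain ⟨t, ht, htB⟩ := ((hlim.eventually_gt_atTop B).and h).exists
  exact (ht.trans_le htB).false

theorem Complex.eq_zero_of_eventually_eq_mul_log_add {f g : ℂ → ℂ} {a : ℂ} {B : ℝ}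
    (hf : ∀ᶠ z in 𝓝[≠] 0, DifferentiableAt ℂ f z) (hg : ∀ᶠ z in 𝓝 0, ‖g z‖ ≤ B)
    (hfg : ∀ᶠ z in 𝓝[slitPlane] 0, f z = a * log z + g z) : a = 0 := by
  have hslit : ∀ᶠ z in 𝓝[slitPlane] 0,
      ‖f z‖ ≤ ‖a‖ * |Real.log ‖z‖| + (‖a‖ * Real.pi + B) := by
    filter_upwards [hfg, nhdsWithin_le_nhds hg] with z hfz hgz
    calc ‖f z‖ ≤ ‖a‖ * ‖log z‖ + ‖g z‖ := by
          rw [hfz, ← norm_mul]; exact norm_add_le _ _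
      _ ≤ _ := by nlinarith [norm_log_le_abs_log_norm_add_pi z, norm_nonneg a]
  have hpunct := hslit.nhdsNE_of_nhdsWithin_dense dense_slitPlane_s15
    (hf.mono fun z hz => hz.continuousAt.norm)
    (eventually_nhdsWithin_of_forall fun z (hz : z ≠ 0) =>
      ((continuous_norm.continuousAt.log (norm_ne_zero_iff.2 hz)).abs.const_mul _).add
        continuousAt_const)
  obtain ⟨L, hL⟩ := exists_tendsto_of_norm_le_mul_abs_log hf (by simpa using hpunct)
  have hreal : Tendsto (fun t : ℝ => (t : ℂ)) (𝓝[>] 0) (𝓝[slitPlane] 0) := by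
    refine tendsto_nhdsWithin_iff.2 ⟨?_, eventually_nhdsWithin_of_forall fun t ht =>
      ofReal_mem_slitPlane.2 ht⟩
    simpa using (continuous_ofReal.tendsto 0).mono_left nhdsWithin_le_nhds
  have hfL :=
    (hL.comp (hreal.mono_right (nhdsWithin_mono _ fun _ => slitPlane_ne_zero))).norm
  have hbdd : ∀ᶠ t in 𝓝[>] (0 : ℝ), ‖a‖ * |Real.log t| ≤ ‖L‖ + 1 + B := by
    filter_upwards [self_mem_nhdsWithin, hreal.eventually hfg,
      hfL.eventually_lt_const (lt_add_one ‖L‖),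
      hreal.eventually (eventually_nhdsWithin_of_eventually_nhds hg)]
      with t (ht : 0 < t) hft hfLt hgt
    calc ‖a‖ * |Real.log t| = ‖f t - g t‖ := by
          rw [hft, add_sub_cancel_right, norm_mul, ← ofReal_log ht.le, norm_real,
            Real.norm_eq_abs]
      _ ≤ ‖f t‖ + ‖g t‖ := norm_sub_le _ _
      _ ≤ ‖L‖ + 1 + B := by simp only [Function.comp_apply] at hfLt; linarith
  exact norm_eq_zero.1
    ((Real.nonpos_of_eventually_mul_abs_log_le hbdd).antisymm (norm_nonneg a))

lemma Complex.eq_one_and_eq_of_mul_ofReal_eq {lam : ℂ} {ν νt : ℝ} (hlam : ‖lam‖ = 1)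
    (hν : 0 < ν) (hνt : 0 < νt) (h : lam * ν = νt) : lam = 1 ∧ νt = ν := by
  have hνν : νt = ν := by
    simpa [hlam, abs_of_pos hν, abs_of_pos hνt] using (congrArg norm h).symm
  refine ⟨mul_right_cancel₀ (ofReal_ne_zero.2 hν.ne') ?_, hνν⟩
  rw [h, hνν, one_mul]

theorem third_form_residue_unique_general
    (ν νt : ℝ) (hν : 0 < ν) (hνt : 0 < νt)
    (n : ℕ)
    (lam : ℂ) (hlam : ‖lam‖ = 1) (ζ₀ : ℂ)
    (ε : ℝ) (hε : 0 < ε)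
    (h : ℂ → ℂ) (hh : DifferentiableOn ℂ h (ball 0 ε)) (hh0 : h 0 ≠ 0)
    (δ : ℝ) (hδ : 0 < δ)
    (heq : ∀ z : ℂ, 0 < ‖z‖ → ‖z‖ < δ → (0 < z.re ∨ z.im ≠ 0) →
      (νt : ℂ) * Complex.log z + (νt : ℂ) * Complex.log (h z) +
          (z * h z) ^ (-(n : ℤ)) =
        lam * (ν : ℂ) * Complex.log z + lam * z ^ (-(n : ℤ)) + ζ₀) :
    lam = 1 ∧ νt = ν := by
  have hdiff : ∀ᶠ z in 𝓝 0, DifferentiableAt ℂ h z :=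
    (isOpen_ball.eventually_mem (mem_ball_self hε)).mono fun z hz =>
      hh.differentiableAt (isOpen_ball.mem_nhds hz)
  have hcont : ContinuousAt h 0 := hdiff.self_of_nhds.continuousAt
  obtain ⟨B, hB⟩ := hcont.exists_eventually_norm_log_le hh0
  have hw : ∀ᶠ z in 𝓝[≠] 0,
      DifferentiableAt ℂ (fun z => (z * h z) ^ (-(n : ℤ)) - lam * z ^ (-(n : ℤ))) z := by
    filter_upwards [self_mem_nhdsWithin,
      nhdsWithin_le_nhds (hdiff.and (hcont.eventually_ne hh0))] with z (hz : z ≠ 0) ⟨hdz, hhz⟩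
    exact ((differentiableAt_id.mul hdz).zpow (Or.inl (mul_ne_zero hz hhz))).sub
      ((differentiableAt_zpow.2 (Or.inl hz)).const_mul lam)
  have hslit : ∀ᶠ z in 𝓝[slitPlane] 0, (z * h z) ^ (-(n : ℤ)) - lam * z ^ (-(n : ℤ)) =
      (lam * ν - νt) * log z + (ζ₀ - νt * log (h z)) := by
    filter_upwards [self_mem_nhdsWithin, nhdsWithin_le_nhds (ball_mem_nhds 0 hδ)]
      with z hz hzδ
    linear_combination heq z (norm_pos_iff.2 (slitPlane_ne_zero hz)) (mem_ball_zero_iff.1 hzδ)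
      (mem_slitPlane_iff.1 hz)
  have hbdd : ∀ᶠ z in 𝓝 0, ‖ζ₀ - νt * log (h z)‖ ≤ ‖ζ₀‖ + νt * B := by
    filter_upwards [hB] with z hz
    calc ‖ζ₀ - νt * log (h z)‖ ≤ ‖ζ₀‖ + νt * ‖log (h z)‖ := by
          simpa [abs_of_pos hνt] using norm_sub_le ζ₀ (νt * log (h z))
      _ ≤ ‖ζ₀‖ + νt * B := by gcongr
  exact eq_one_and_eq_of_mul_ofReal_eq hlam hν hνt
    (sub_eq_zero.1 (eq_zero_of_eventually_eq_mul_log_add hw hbdd hslit))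

/-- Uniqueness of the residue parameter ν in the third normal form: if
ν̃ log z + ν̃ log h(z) + (zh(z))^{-n} = λν log z + λ z^{-n} + ζ₀ near 0 (principal
logarithm on a slit punctured neighborhood), with |λ| = 1, ν, ν̃ > 0, and h holomorphic
with h(0) ≠ 0, then λ = 1 and ν̃ = ν. -/
theorem third_form_residue_unique
    (ν νt : ℝ) (hν : 0 < ν) (hνt : 0 < νt)
    (n : ℕ) (hn : 1 ≤ n)
    (lam : ℂ) (hlam : ‖lam‖ = 1) (ζ₀ : ℂ)
    (ε : ℝ) (hε : 0 < ε)
    (h : ℂ → ℂ) (hh : DifferentiableOn ℂ h (ball 0 ε)) (hh0 : h 0 ≠ 0)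
    (δ : ℝ) (hδ : 0 < δ) (hδε : δ ≤ ε)
    (heq : ∀ z : ℂ, 0 < ‖z‖ → ‖z‖ < δ → (0 < z.re ∨ z.im ≠ 0) →
      (νt : ℂ) * Complex.log z + (νt : ℂ) * Complex.log (h z) +
          (z * h z) ^ (-(n : ℤ)) =
        lam * (ν : ℂ) * Complex.log z + lam * z ^ (-(n : ℤ)) + ζ₀) :
    lam = 1 ∧ νt = ν :=
  third_form_residue_unique_general ν νt hν hνt n lam hlam ζ₀ ε hε h hh hh0 δ hδ heq
end
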